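/- arXiv:1910.11181 — 2 statements merged into one kernel-verified Lean document; each statement's English description precedes it below -/
import Mathlib

section
/- Suppose σ is a winning strategy for player I in the measure game G(s,A). Define M : 2^{<ω} → ℝ by: M(∅) = m_0 + m_1 where (m_0, m_1) is σ's first move; for a finite binary string t that is a legal sequence of II's moves against σ, if σ's response at position t is (m_{t⌢0}, m_{t⌢1}) then M(t⌢i) = m_{t⌢i} for i ∈ {0,1}; and M(t⌢i) = 0 if t is not a legal sequence of II's moves against σ. Then M is a scaled measure, and if T is the support of M, then every branch of T lies in the complement of A and μ([T]) ≥ M(∅) > s. -/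
open MeasureTheory

namespace MeasureGame

/-- Cantor space `2^ω`. -/
abbrev Cantor : Type := ℕ → Bool

/-- The basic cylinder set `N_t` determined by a finite binary string `t`. -/
def cyl (t : List Bool) : Set Cantor := {x | ∀ i : Fin t.length, x i.1 = t.get i}

/-- A round of the measure game: player I's pair of rationals, then player II's bit. -/
abbrev GRound : Type := (ℚ × ℚ) × Bool

/-- A strategy for player I in the measure game. -/
abbrev StratI : Type := List GRound → ℚ × ℚ

/-- A strategy for player II in the measure game. -/
abbrev StratII : Type := List GRound → ℚ × ℚ → Bool

/-- A run of the measure game. -/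
abbrev Run : Type := ℕ → GRound

/-- The history (list of completed rounds) before round `n`. -/
def hist (r : Run) (n : ℕ) : List GRound := (List.range n).map r

/-- Player II's bit at round `n`. -/
def bits (r : Run) (n : ℕ) : Bool := (r n).2

/-- The finite binary string of player II's first `n` bits. -/
def path (r : Run) (n : ℕ) : List Bool := (List.range n).map (bits r)

/-- The value player I assigned at round `n` to the one-bit extension of the current path by `b`. -/
def valI (r : Run) (n : ℕ) (b : Bool) : ℚ := if b then (r n).1.2 else (r n).1.1

/-- The value selected by player II's move at round `n`. -/
def sel (r : Run) (n : ℕ) : ℚ := valI r n (bits r n)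

/-- Legality requirements on the single value player I assigned to `path r n ++ [b]`:
it is nonnegative, at most `μ(N_{t⌢b})`, and strictly below it when the latter is positive. -/
def mOK (μ : Measure Cantor) (r : Run) (n : ℕ) (b : Bool) : Prop :=
  0 ≤ valI r n b ∧ ((valI r n b : ℝ) ≤ (μ (cyl (path r n ++ [b]))).toReal) ∧
    (0 < (μ (cyl (path r n ++ [b]))).toReal → (valI r n b : ℝ) < (μ (cyl (path r n ++ [b]))).toReal)

/-- Player I's move at round `n` of a run is legal (for the game `G(s, ·)`). -/
def IOK (μ : Measure Cantor) (s : ℝ) (r : Run) : ℕ → Prop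
  | 0 => mOK μ r 0 false ∧ mOK μ r 0 true ∧ s < ((r 0).1.1 : ℝ) + ((r 0).1.2 : ℝ)
  | (n + 1) => mOK μ r (n + 1) false ∧ mOK μ r (n + 1) true ∧
      (r (n + 1)).1.1 + (r (n + 1)).1.2 = sel r n

/-- Player II's move at round `n` of a run is legal: the selected value is nonzero. -/
def IIOK (r : Run) (n : ℕ) : Prop := sel r n ≠ 0

/-- The run `r` is consistent with player I's strategy `σ`. -/
def ConsI (σ : StratI) (r : Run) : Prop := ∀ n, (r n).1 = σ (hist r n)

/-- The run `r` is consistent with player II's strategy `τ`. -/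
def ConsII (τ : StratII) (r : Run) : Prop := ∀ n, (r n).2 = τ (hist r n) (r n).1

/-- Player II wins the run `r` of `G(s, A)`: either player I is the first to break a rule,
or all rules are followed and the sequence of II's bits belongs to `A`. -/
def IIWinsRun (μ : Measure Cantor) (s : ℝ) (A : Set Cantor) (r : Run) : Prop :=
  (∃ n, (∀ m < n, IOK μ s r m ∧ IIOK r m) ∧ ¬ IOK μ s r n) ∨
    ((∀ n, IOK μ s r n ∧ IIOK r n) ∧ bits r ∈ A)

/-- Player I has a winning strategy in the measure game `G(s, A)`. -/
def WinsI (μ : Measure Cantor) (s : ℝ) (A : Set Cantor) : Prop :=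
  ∃ σ : StratI, ∀ r : Run, ConsI σ r → ¬ IIWinsRun μ s A r

/-- Player II has a winning strategy in the measure game `G(s, A)`. -/
def WinsII (μ : Measure Cantor) (s : ℝ) (A : Set Cantor) : Prop :=
  ∃ τ : StratII, ∀ r : Run, ConsII τ r → IIWinsRun μ s A r

/-- The outer measure `μ*(A) = inf {μ(U) : U open, A ⊆ U}`. -/
noncomputable def outerM (μ : Measure Cantor) (A : Set Cantor) : ℝ :=
  sInf {v : ℝ | ∃ U : Set Cantor, IsOpen U ∧ A ⊆ U ∧ v = (μ U).toReal}

/-- The inner measure `μ_*(A) = sup {μ(F) : F closed, F ⊆ A}`. -/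
noncomputable def innerM (μ : Measure Cantor) (A : Set Cantor) : ℝ :=
  sSup {v : ℝ | ∃ F : Set Cantor, IsClosed F ∧ F ⊆ A ∧ v = (μ F).toReal}


open scoped Classical

/-- `M : 2^{<ω} → ℝ` is a scaled measure for `μ`. -/
def ScaledMeasure (μ : Measure Cantor) (M : List Bool → ℝ) : Prop :=
  0 < M [] ∧ ∀ t : List Bool,
    (0 ≤ M t ∧ M t ≤ (μ (cyl t)).toReal) ∧ M t = M (t ++ [false]) + M (t ++ [true])

/-- The set of infinite branches through a set `T` of finite binary strings. -/
def branches (T : Set (List Bool)) : Set Cantor := {x | ∀ n : ℕ, (List.range n).map x ∈ T}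

/-- The history of the run in which player I follows `σ` and player II plays the bits of `x`. -/
def histOf (σ : StratI) (x : Cantor) : ℕ → List GRound
  | 0 => []
  | (n + 1) => histOf σ x n ++ [(σ (histOf σ x n), x n)]

/-- The run in which player I follows `σ` and player II plays the bits of `x`. -/
def runOf (σ : StratI) (x : Cantor) : Run := fun n => (σ (histOf σ x n), x n)

/-- The finite binary string `t` is a legal sequence of moves by player II against `σ`,
i.e. II's rule (the selected value is nonzero) is obeyed at every round. -/
def legalAgainst (σ : StratI) (t : List Bool) : Prop :=
  ∀ n < t.length, sel (runOf σ (fun i => t.getD i false)) n ≠ 0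

/-- `σ`'s response at the position where player II has played the bits of `t`. -/
def respOf (σ : StratI) (t : List Bool) : ℚ × ℚ :=
  σ (histOf σ (fun i => t.getD i false) t.length)

/-- The function `M` induced by player I's strategy `σ`: `M(∅)` is the sum of `σ`'s first
move, `M(t⌢i)` is the `i`-component of `σ`'s response at `t` when `t` is a legal sequence of
II's moves against `σ`, and `M(t⌢i) = 0` otherwise. -/
noncomputable def inducedM (σ : StratI) (t : List Bool) : ℝ :=
  if t.isEmpty then ((σ []).1 : ℝ) + ((σ []).2 : ℝ)
  else if legalAgainst σ t.dropLast then
    (((if t.getLastD false then (respOf σ t.dropLast).2 else (respOf σ t.dropLast).1) : ℚ) : ℝ)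
  else 0

/-!
Along any sequence of legal moves of II, the values that `σ` proposes are legal moves of I, so
`M = inducedM σ` splits additively over `t⌢0, t⌢1` and is bounded by `μ(N_t)`; and `M(t) ≠ 0`
exactly when `t` is a legal sequence of II's moves. A branch along which `M` stays positive is
therefore a run in which both players always move legally, and since `σ` wins it lies outside `A`.

Any `M` that is additive and bounded by `μ` on cylinders satisfies `M(t) ≤ μ(N_t ∩ U_n)` for
`n ≥ |t|`, where `U_n = {x : M(x↾n) > 0}`: for `n = |t|` this is the bound `M(t) ≤ μ(N_t)`, and
both sides split additively over `t⌢0, t⌢1`. The sets `U_n` decrease to `[T]`, so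
`μ([T]) ≥ M(∅)`.
-/

lemma mem_cyl_iff_map_range {x : Cantor} {t : List Bool} :
    x ∈ cyl t ↔ (List.range t.length).map x = t := by
  refine ⟨fun hx => List.ext_getElem (by simp) fun i _ hi => by simpa using hx ⟨i, hi⟩,
    fun hx ⟨i, hi⟩ => ?_⟩
  simpa using (List.getElem_of_eq hx.symm hi).symm

lemma map_range_mem_cyl (x : Cantor) (n : ℕ) : x ∈ cyl ((List.range n).map x) := by
  rw [mem_cyl_iff_map_range, List.length_map, List.length_range]

lemma mem_cyl_append {x : Cantor} {t : List Bool} {b : Bool} :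
    x ∈ cyl (t ++ [b]) ↔ x ∈ cyl t ∧ x t.length = b := by
  simp [mem_cyl_iff_map_range, List.range_succ]

lemma getD_eq_of_mem_cyl {t : List Bool} {x : Cantor} (hx : x ∈ cyl t) {i : ℕ}
    (hi : i < t.length) : t.getD i false = x i := by
  rw [List.getD_eq_getElem _ _ hi]
  exact (hx ⟨i, hi⟩).symm

lemma cyl_nonempty (t : List Bool) : (cyl t).Nonempty :=
  ⟨fun i => t.getD i false, fun i => by simp⟩

lemma measurableSet_cyl (t : List Bool) : MeasurableSet (cyl t) := by
  have : cyl t = ⋂ i : Fin t.length, (fun x : Cantor => x i) ⁻¹' {t.get i} := by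
    ext x
    simp [cyl]
  rw [this]
  exact .iInter fun i => measurable_pi_apply _ (measurableSet_singleton _)

lemma measurableSet_setOf_map_range (P : List Bool → Prop) (n : ℕ) :
    MeasurableSet {x : Cantor | P ((List.range n).map x)} := by
  have : {x : Cantor | P ((List.range n).map x)} = ⋃ t ∈ {t | t.length = n ∧ P t}, cyl t := by
    ext x
    simp only [Set.mem_ofPred_eq, Set.mem_iUnion, exists_prop, mem_cyl_iff_map_range]
    exact ⟨fun h => ⟨_, ⟨by simp, h⟩, by simp⟩, by rintro ⟨t, ⟨rfl, ht⟩, hxt⟩; rwa [hxt]⟩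
  rw [this]
  exact .biUnion (Set.to_countable _) fun t _ => measurableSet_cyl t

lemma measure_cyl_inter_eq_add (μ : Measure Cantor) (t : List Bool) (V : Set Cantor) :
    μ (cyl t ∩ V) = μ (cyl (t ++ [false]) ∩ V) + μ (cyl (t ++ [true]) ∩ V) := by
  rw [← measure_inter_add_sdiff (cyl t ∩ V) (measurableSet_cyl (t ++ [false]))]
  congr 2 <;> ext x <;> cases hx : x t.length <;> simp [mem_cyl_append, hx] <;> tauto

lemma toReal_measure_cyl_inter_eq_add (μ : Measure Cantor) [IsFiniteMeasure μ] (t : List Bool)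
    (V : Set Cantor) : (μ (cyl t ∩ V)).toReal =
      (μ (cyl (t ++ [false]) ∩ V)).toReal + (μ (cyl (t ++ [true]) ∩ V)).toReal := by
  rw [measure_cyl_inter_eq_add, ENNReal.toReal_add (measure_ne_top _ _) (measure_ne_top _ _)]

namespace ScaledMeasure

variable {μ : Measure Cantor} {M : List Bool → ℝ}

lemma apply_append_le (hM : ScaledMeasure μ M) (t : List Bool) (b : Bool) :
    M (t ++ [b]) ≤ M t := by
  have h₀ := (hM.2 (t ++ [false])).1.1
  have h₁ := (hM.2 (t ++ [true])).1.1
  rw [(hM.2 t).2]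
  cases b <;> linarith

variable [IsFiniteMeasure μ]

lemma le_measure_cyl_inter_support (hM : ScaledMeasure μ M) (n : ℕ) (t : List Bool) :
    M t ≤ (μ (cyl t ∩ {x | 0 < M ((List.range (t.length + n)).map x)})).toReal := by
  induction n generalizing t with
  | zero =>
    obtain hpos | hzero := (hM.2 t).1.1.lt_or_eq
    · have : cyl t ∩ {x | 0 < M ((List.range t.length).map x)} = cyl t :=
        Set.inter_eq_left.2 fun x hx => by
          rwa [Set.mem_ofPred_eq, mem_cyl_iff_map_range.1 hx]
      simpa [this] using (hM.2 t).1.2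
    · rw [← hzero]
      exact ENNReal.toReal_nonneg
  | succ n ih =>
    have hchild (b : Bool) := ih (t ++ [b])
    simp only [List.length_append, List.length_singleton, add_right_comm] at hchild
    rw [(hM.2 t).2, toReal_measure_cyl_inter_eq_add]
    exact add_le_add (hchild false) (hchild true)

theorem apply_nil_le_measure_branches (hM : ScaledMeasure μ M) :
    M [] ≤ (μ (branches {t | 0 < M t})).toReal := by
  set U : ℕ → Set Cantor := fun n => {x | 0 < M ((List.range n).map x)}
  have hU : Antitone U := antitone_nat_of_succ_le fun n x hx => by
    simp only [U, Set.mem_ofPred_eq, List.range_succ, List.map_append] at hx ⊢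
    exact hx.trans_le (hM.apply_append_le _ _)
  have hbranches : branches {t | 0 < M t} = ⋂ n, U n := by
    ext x
    simp [branches, U]
  have hmeas (n : ℕ) : MeasurableSet (U n) := measurableSet_setOf_map_range (0 < M ·) n
  have hlim := (ENNReal.tendsto_toReal (measure_ne_top μ _)).comp <|
    tendsto_measure_iInter_atTop (fun n => (hmeas n).nullMeasurableSet) hU ⟨0, measure_ne_top μ _⟩
  rw [hbranches]
  refine ge_of_tendsto' hlim fun n => ?_
  simpa [cyl] using hM.le_measure_cyl_inter_support n []

end ScaledMeasure

lemma IOK.mOK {μ : Measure Cantor} {s : ℝ} {r : Run} {n : ℕ} (h : IOK μ s r n) (b : Bool) :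
    mOK μ r n b := by
  rcases n with _ | n <;> obtain ⟨h₀, h₁, -⟩ := h <;> cases b <;> assumption

section Strategy

variable (σ : StratI)

lemma hist_runOf (x : Cantor) (n : ℕ) : hist (runOf σ x) n = histOf σ x n := by
  induction n with
  | zero => rfl
  | succ n ih =>
    rw [hist, List.range_succ, List.map_append, ← hist, ih]
    rfl

lemma consI_runOf (x : Cantor) : ConsI σ (runOf σ x) := fun n => by
  rw [hist_runOf]
  rfl

lemma legalAgainst_nil : legalAgainst σ [] := fun n hn => absurd hn n.not_lt_zero

variable {σ}

lemma histOf_congr {x y : Cantor} {n : ℕ} (h : ∀ i < n, x i = y i) :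
    histOf σ x n = histOf σ y n := by
  induction n with
  | zero => rfl
  | succ n ih => rw [histOf, histOf, ih fun i hi => h i (by omega), h n n.lt_succ_self]

lemma sel_runOf_congr {x y : Cantor} {n : ℕ} (h : ∀ i ≤ n, x i = y i) :
    sel (runOf σ x) n = sel (runOf σ y) n := by
  have hround : runOf σ x n = runOf σ y n := by
    rw [runOf, runOf, histOf_congr fun i hi => h i hi.le, h n le_rfl]
  -- `sel` carries a decidability instance on `bits r n`; stated through `r n` it can be rewritten
  have hsel (r : Run) : sel r n = if (r n).2 then (r n).1.2 else (r n).1.1 := rfl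
  rw [hsel, hsel, hround]

lemma path_runOf_of_mem_cyl {t : List Bool} {x : Cantor} (hx : x ∈ cyl t) :
    path (runOf σ x) t.length = t :=
  mem_cyl_iff_map_range.1 hx

lemma respOf_eq_of_mem_cyl {t : List Bool} {x : Cantor} (hx : x ∈ cyl t) :
    respOf σ t = (runOf σ x t.length).1 :=
  congrArg σ (histOf_congr fun _ hi => getD_eq_of_mem_cyl hx hi)

lemma legalAgainst_iff_of_mem_cyl {t : List Bool} {x : Cantor} (hx : x ∈ cyl t) :
    legalAgainst σ t ↔ ∀ n < t.length, IIOK (runOf σ x) n :=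
  forall₂_congr fun n hn => by
    rw [IIOK, sel_runOf_congr fun i hi => getD_eq_of_mem_cyl hx (by omega)]

lemma inducedM_append_of_legalAgainst {t : List Bool} {x : Cantor} (hx : x ∈ cyl t)
    (ht : legalAgainst σ t) (b : Bool) :
    inducedM σ (t ++ [b]) = valI (runOf σ x) t.length b := by
  rw [inducedM, if_neg (by simp), List.dropLast_concat, if_pos ht, List.getLastD_concat,
    respOf_eq_of_mem_cyl hx, valI]

lemma inducedM_append_of_not_legalAgainst {t : List Bool} (ht : ¬ legalAgainst σ t) (b : Bool) :
    inducedM σ (t ++ [b]) = 0 := by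
  rw [inducedM, if_neg (by simp), List.dropLast_concat, if_neg ht]

lemma legalAgainst_append_iff {t : List Bool} {b : Bool} :
    legalAgainst σ (t ++ [b]) ↔ legalAgainst σ t ∧ inducedM σ (t ++ [b]) ≠ 0 := by
  obtain ⟨x, hx⟩ := cyl_nonempty (t ++ [b])
  obtain ⟨hxt, hxb⟩ := mem_cyl_append.1 hx
  rw [legalAgainst_iff_of_mem_cyl hx, legalAgainst_iff_of_mem_cyl hxt, List.length_append,
    List.length_singleton, Nat.forall_lt_succ_right]
  refine and_congr_right fun ht => ?_
  rw [inducedM_append_of_legalAgainst hxt ((legalAgainst_iff_of_mem_cyl hxt).2 ht), IIOK, sel,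
    bits, Rat.cast_ne_zero, ← hxb]
  rfl

lemma inducedM_eq_zero_of_not_legalAgainst {t : List Bool} (ht : ¬ legalAgainst σ t) :
    inducedM σ t = 0 := by
  obtain rfl | ⟨u, b, rfl⟩ := List.eq_nil_or_concat' t
  · exact absurd (legalAgainst_nil σ) ht
  · by_cases hu : legalAgainst σ u
    · simpa [legalAgainst_append_iff, hu] using ht
    · exact inducedM_append_of_not_legalAgainst hu b

end Strategy

def IsWinningI (μ : Measure Cantor) (s : ℝ) (A : Set Cantor) (σ : StratI) : Prop :=
  ∀ r : Run, ConsI σ r → ¬ IIWinsRun μ s A r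

section Winning

variable {μ : Measure Cantor} {s : ℝ} {A : Set Cantor} {σ : StratI}

lemma IOK_of_forall_lt_IIOK (hσ : IsWinningI μ s A σ) {r : Run}
    (hr : ConsI σ r) {n : ℕ} (hII : ∀ m < n, IIOK r m) : IOK μ s r n := by
  have hI := (not_or.1 (hσ r hr)).1
  push Not at hI
  induction n using Nat.strong_induction_on with
  | _ n ih => exact hI n fun m hm => ⟨ih m hm fun k hk => hII k (hk.trans hm), hII m hm⟩

lemma bits_notMem_of_forall_IIOK (hσ : IsWinningI μ s A σ) {r : Run}
    (hr : ConsI σ r) (hII : ∀ n, IIOK r n) : bits r ∉ A := fun hA =>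
  hσ r hr (.inr ⟨fun n => ⟨IOK_of_forall_lt_IIOK hσ hr fun m _ => hII m, hII n⟩, hA⟩)

lemma IOK_runOf_of_legalAgainst (hσ : IsWinningI μ s A σ) {t : List Bool} {x : Cantor}
    (hx : x ∈ cyl t) (ht : legalAgainst σ t) :
    IOK μ s (runOf σ x) t.length :=
  IOK_of_forall_lt_IIOK hσ (consI_runOf σ x) ((legalAgainst_iff_of_mem_cyl hx).1 ht)

lemma lt_inducedM_nil (hσ : IsWinningI μ s A σ) : s < inducedM σ [] := by
  obtain ⟨x, hx⟩ := cyl_nonempty []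
  obtain ⟨-, -, hs⟩ := IOK_runOf_of_legalAgainst hσ hx (legalAgainst_nil σ)
  exact hs

lemma inducedM_append_nonneg_le (hσ : IsWinningI μ s A σ) (t : List Bool) (b : Bool) :
    0 ≤ inducedM σ (t ++ [b]) ∧ inducedM σ (t ++ [b]) ≤ (μ (cyl (t ++ [b]))).toReal := by
  by_cases ht : legalAgainst σ t
  · obtain ⟨x, hx⟩ := cyl_nonempty t
    obtain ⟨h₀, h₁, -⟩ := (IOK_runOf_of_legalAgainst hσ hx ht).mOK b
    rw [path_runOf_of_mem_cyl hx] at h₁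
    rw [inducedM_append_of_legalAgainst hx ht]
    exact ⟨Rat.cast_nonneg.2 h₀, h₁⟩
  · rw [inducedM_append_of_not_legalAgainst ht]
    exact ⟨le_rfl, ENNReal.toReal_nonneg⟩

lemma inducedM_eq_add (hσ : IsWinningI μ s A σ) (t : List Bool) :
    inducedM σ t = inducedM σ (t ++ [false]) + inducedM σ (t ++ [true]) := by
  by_cases ht : legalAgainst σ t
  · obtain ⟨x, hx⟩ := cyl_nonempty t
    rw [inducedM_append_of_legalAgainst hx ht, inducedM_append_of_legalAgainst hx ht]
    obtain rfl | ⟨u, c, rfl⟩ := List.eq_nil_or_concat' t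
    · simp [inducedM, valI, runOf, histOf]
    · have hIOK := IOK_runOf_of_legalAgainst hσ hx ht
      rw [List.length_append, List.length_singleton] at hIOK
      obtain ⟨-, -, hsum⟩ := hIOK
      obtain ⟨hxu, hxc⟩ := mem_cyl_append.1 hx
      have hsel : sel (runOf σ x) u.length = valI (runOf σ x) u.length c := by
        rw [sel, bits, ← hxc]
        rfl
      rw [inducedM_append_of_legalAgainst hxu (legalAgainst_append_iff.1 ht).1, ← hsel, ← hsum]
      simp [valI]
  · rw [inducedM_eq_zero_of_not_legalAgainst ht, inducedM_append_of_not_legalAgainst ht,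
      inducedM_append_of_not_legalAgainst ht, add_zero]

theorem scaledMeasure_inducedM [IsFiniteMeasure μ] (hσ : IsWinningI μ s A σ) (hs : 0 ≤ s) :
    ScaledMeasure μ (inducedM σ) := by
  refine ⟨hs.trans_lt (lt_inducedM_nil hσ), fun t => ⟨?_, inducedM_eq_add hσ t⟩⟩
  obtain rfl | ⟨u, b, rfl⟩ := List.eq_nil_or_concat' t
  · have h₀ := inducedM_append_nonneg_le hσ [] false
    have h₁ := inducedM_append_nonneg_le hσ [] true
    have hcyl := toReal_measure_cyl_inter_eq_add μ [] Set.univ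
    simp only [Set.inter_univ] at hcyl
    rw [inducedM_eq_add hσ [], hcyl]
    constructor <;> linarith
  · exact inducedM_append_nonneg_le hσ u b

theorem branches_inducedM_subset_compl (hσ : IsWinningI μ s A σ) :
    branches {t | 0 < inducedM σ t} ⊆ Aᶜ := by
  intro x hx
  have hlegal (n : ℕ) : legalAgainst σ ((List.range n).map x) := by
    by_contra h
    exact (hx n).ne' (inducedM_eq_zero_of_not_legalAgainst h)
  refine bits_notMem_of_forall_IIOK hσ (consI_runOf σ x) fun n => ?_
  exact (legalAgainst_iff_of_mem_cyl (map_range_mem_cyl x (n + 1))).1 (hlegal (n + 1)) n (by simp)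

end Winning

theorem scaledMeasure_of_winning_I_general (μ : Measure Cantor) [IsProbabilityMeasure μ]
    (A : Set Cantor) (s : ℝ) (hs0 : 0 ≤ s) (σ : StratI)
    (hσ : ∀ r : Run, ConsI σ r → ¬ IIWinsRun μ s A r) :
    ScaledMeasure μ (inducedM σ) ∧
      branches {t | 0 < inducedM σ t} ⊆ Aᶜ ∧
      s < inducedM σ [] ∧
      inducedM σ [] ≤ (μ (branches {t | 0 < inducedM σ t})).toReal := by
  have hM := scaledMeasure_inducedM hσ hs0
  exact ⟨hM, branches_inducedM_subset_compl hσ, lt_inducedM_nil hσ,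
    hM.apply_nil_le_measure_branches⟩

/-- If `σ` is a winning strategy for player I in `G(s, A)`, then the induced `M` is a scaled
measure whose support tree `T` satisfies `[T] ⊆ Aᶜ` and `μ([T]) ≥ M(∅) > s`. -/
theorem scaledMeasure_of_winning_I (μ : Measure Cantor) [IsProbabilityMeasure μ]
    (A : Set Cantor) (s : ℝ) (hs0 : 0 ≤ s) (hs1 : s < 1) (σ : StratI)
    (hσ : ∀ r : Run, ConsI σ r → ¬ IIWinsRun μ s A r) :
    ScaledMeasure μ (inducedM σ) ∧
      branches {t | 0 < inducedM σ t} ⊆ Aᶜ ∧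
      s < inducedM σ [] ∧
      inducedM σ [] ≤ (μ (branches {t | 0 < inducedM σ t})).toReal :=
  scaledMeasure_of_winning_I_general μ A s hs0 σ hσ

end MeasureGame
end

section
/- Let τ be a winning strategy for player II in the measure game G(s,A). Let p be a finite position consistent with τ in which II's moves so far form the string t = x_0…x_n and I's moves form the sequence m̂ (so at each stage τ chose side x_i in response to the corresponding moves of I). For i ∈ {0,1} define δ(i) = inf( {m_{t⌢i} : there exists a legal next move (m_{t⌢0}, m_{t⌢1}) of player I at p with m_{t⌢0} + m_{t⌢1} = m_t and τ responds to it by choosing side i} ∪ {μ(N_{t⌢i})} ), where m_t is the value assigned to t by I's last move (and in the case of the empty position, r = s below). Then δ(0) + δ(1) ≤ r, where r = m_t if |t| > 0 and r = s if t is the empty string, and moreover δ(i) ≤ μ(N_{t⌢i}) for each i ∈ {0,1}. -/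
open MeasureTheory

namespace MeasureGame

/-- The value selected by player II's bit in a single round. -/
def selOf (p : GRound) : ℚ := if p.2 then p.1.2 else p.1.1

/-- `m` is a legal next move for player I after the finite position `h` in `G(s, ·)`:
both components are nonnegative, bounded by (and strictly below, when positive) the measures
of the corresponding cylinders, their sum exceeds `s` if `h` is the empty position, and
otherwise equals the value `m_t` selected by player II's last move. -/
def legalMoveI (μ : Measure Cantor) (s : ℝ) (h : List GRound) (m : ℚ × ℚ) : Prop :=
  (0 ≤ m.1 ∧ ((m.1 : ℝ) ≤ (μ (cyl ((h.map fun p => p.2) ++ [false]))).toReal) ∧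
    (0 < (μ (cyl ((h.map fun p => p.2) ++ [false]))).toReal →
      (m.1 : ℝ) < (μ (cyl ((h.map fun p => p.2) ++ [false]))).toReal)) ∧
  (0 ≤ m.2 ∧ ((m.2 : ℝ) ≤ (μ (cyl ((h.map fun p => p.2) ++ [true]))).toReal) ∧
    (0 < (μ (cyl ((h.map fun p => p.2) ++ [true]))).toReal →
      (m.2 : ℝ) < (μ (cyl ((h.map fun p => p.2) ++ [true]))).toReal)) ∧
  (if h.isEmpty then s < (m.1 : ℝ) + (m.2 : ℝ)
   else m.1 + m.2 = selOf (h.getLastD ((0, 0), false)))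

/-! Suppose `δ(0) + δ(1) > r`. Then player I has a legal move `(q₀, q₁)` with the required
total in which each `qᵢ` is either `0` or strictly below `δ(i)`. Whichever side `i` the strategy
`τ` picks, `δ(i) ≤ qᵢ` by the definition of `δ`, so `qᵢ = 0`. But a winning `τ` never selects a
zero value after a legal move: otherwise let I replay the position, play `(q₀, q₁)` and then
`(0, 0)` forever; in that run I never breaks a rule while II does. -/

lemma hist_succ (r : Run) (n : ℕ) : hist r (n + 1) = hist r n ++ [r n] := by
  simp [hist, List.range_succ]

lemma hist_length (r : Run) (n : ℕ) : (hist r n).length = n := by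
  simp [hist]

lemma path_eq_map_hist (r : Run) (n : ℕ) : path r n = (hist r n).map (·.2) := by
  simp only [path, hist, List.map_map]
  rfl

lemma IOK_of_legalMoveI {μ : Measure Cantor} {s : ℝ} {r : Run} {n : ℕ}
    (hl : legalMoveI μ s (hist r n) (r n).1) : IOK μ s r n := by
  obtain ⟨h0, h1, hsum⟩ := hl
  rw [← path_eq_map_hist] at h0 h1
  cases n with
  | zero => exact ⟨h0, h1, by simpa [hist] using hsum⟩
  | succ k => exact ⟨h0, h1, (by simpa [hist_succ] using hsum : _ = selOf (r k))⟩

lemma legalMoveI_append_zero (μ : Measure Cantor) (s : ℝ) (L : List GRound) {p : GRound}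
    (hp : selOf p = 0) : legalMoveI μ s (L ++ [p]) (0, 0) := by
  refine ⟨⟨le_rfl, ?_⟩, ⟨le_rfl, ?_⟩, ?_⟩ <;> simp [hp]

lemma legalMoveI.selOf_nonneg {μ : Measure Cantor} {s : ℝ} {h : List GRound} {m : ℚ × ℚ}
    (hm : legalMoveI μ s h m) (i : Bool) : 0 ≤ selOf (m, i) := by
  cases i
  exacts [hm.1.1, hm.2.1.1]

section Play

variable (σ : StratI) (τ : StratII)

def playHist : ℕ → List GRound
  | 0 => []
  | n + 1 => playHist n ++ [(σ (playHist n), τ (playHist n) (σ (playHist n)))]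

def play : Run := fun n => (σ (playHist σ τ n), τ (playHist σ τ n) (σ (playHist σ τ n)))

lemma hist_play : ∀ n, hist (play σ τ) n = playHist σ τ n
  | 0 => rfl
  | n + 1 => by rw [hist_succ, hist_play n]; rfl

lemma play_apply (n : ℕ) :
    play σ τ n =
      (σ (hist (play σ τ) n), τ (hist (play σ τ) n) (σ (hist (play σ τ) n))) := by
  rw [hist_play]; rfl

lemma consII_play : ConsII τ (play σ τ) := fun n => by
  rw [play_apply]

end Play

def ConsIIPos (τ : StratII) (h : List GRound) : Prop :=
  ∀ (k : ℕ) (hk : k < h.length), (h.get ⟨k, hk⟩).2 = τ (h.take k) (h.get ⟨k, hk⟩).1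

def LegalIPos (μ : Measure Cantor) (s : ℝ) (h : List GRound) : Prop :=
  ∀ (k : ℕ) (hk : k < h.length), legalMoveI μ s (h.take k) (h.get ⟨k, hk⟩).1

def replayThen (h : List GRound) (m : ℚ × ℚ) : StratI := fun L =>
  if hL : L.length < h.length then h[L.length].1 else if L.length = h.length then m else (0, 0)

section Replay

variable {τ : StratII} {h : List GRound} {m : ℚ × ℚ}

lemma play_replayThen_of_hist {n : ℕ} (hn : n < h.length)
    (hcons : (h.get ⟨n, hn⟩).2 = τ (h.take n) (h.get ⟨n, hn⟩).1)
    (hhist : hist (play (replayThen h m) τ) n = h.take n) :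
    play (replayThen h m) τ n = h.get ⟨n, hn⟩ := by
  rw [play_apply, hhist]
  simp only [List.get_eq_getElem] at hcons ⊢
  simp [replayThen, hn, Nat.min_eq_left hn.le, ← hcons]

lemma hist_play_replayThen
    (hcons : ConsIIPos τ h) :
    ∀ n ≤ h.length, hist (play (replayThen h m) τ) n = h.take n
  | 0, _ => rfl
  | n + 1, hn => by
      have hih := hist_play_replayThen hcons n (Nat.le_of_succ_le hn)
      rw [hist_succ, hih, play_replayThen_of_hist hn (hcons n hn) hih,
        List.take_succ_eq_append_getElem hn]
      rfl

lemma play_replayThen_length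
    (hcons : ConsIIPos τ h) :
    play (replayThen h m) τ h.length = (m, τ h m) := by
  rw [play_apply, hist_play_replayThen hcons _ le_rfl, List.take_length]
  simp [replayThen]

lemma play_replayThen_of_gt {n : ℕ} (hn : h.length < n) :
    (play (replayThen h m) τ n).1 = (0, 0) := by
  rw [play_apply]
  simp [replayThen, hist_length, hn.not_gt, hn.ne']

end Replay

theorem selOf_ne_zero_of_winning {μ : Measure Cantor} {s : ℝ} {A : Set Cantor} {τ : StratII}
    (hτ : ∀ r : Run, ConsII τ r → IIWinsRun μ s A r) {h : List GRound}
    (hcons : ConsIIPos τ h)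
    (hlegalI : LegalIPos μ s h)
    {m : ℚ × ℚ} (hm : legalMoveI μ s h m) : selOf (m, τ h m) ≠ 0 := by
  intro hz
  set r := play (replayThen h m) τ
  have hr_hist : ∀ n ≤ h.length, hist r n = h.take n := hist_play_replayThen hcons
  have hr_lt : ∀ n (hn : n < h.length), r n = h.get ⟨n, hn⟩ := fun n hn =>
    play_replayThen_of_hist hn (hcons n hn) (hr_hist n hn.le)
  have hr_length : r h.length = (m, τ h m) := play_replayThen_length hcons
  have hr_gt : ∀ n, h.length < n → (r n).1 = (0, 0) := fun _ => play_replayThen_of_gt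
  have hsel_zero : ∀ n, h.length ≤ n → sel r n = 0 := by
    intro n hn
    rcases hn.eq_or_lt with rfl | hlt
    · exact (congrArg selOf hr_length).trans hz
    · rw [sel, valI, hr_gt n hlt]
      split <;> rfl
  have hIOK : ∀ n, IOK μ s r n := by
    intro n
    apply IOK_of_legalMoveI
    rcases lt_trichotomy n h.length with hlt | rfl | hgt
    · rw [hr_hist n hlt.le, hr_lt n hlt]
      exact hlegalI n hlt
    · rwa [hr_hist _ le_rfl, List.take_length, hr_length]
    · obtain ⟨k, rfl⟩ : ∃ k, n = k + 1 := Nat.exists_eq_add_one.mpr (by omega)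
      rw [hist_succ, hr_gt _ hgt]
      exact legalMoveI_append_zero μ s _ (hsel_zero k (by omega))
  rcases hτ r (consII_play _ τ) with ⟨n, -, hn⟩ | ⟨hall, -⟩
  · exact hn (hIOK n)
  · exact (hall h.length).2 (hsel_zero _ le_rfl)

lemma exists_rat_split {a : Bool → ℝ} (ha : ∀ i, 0 ≤ a i) {c : ℚ} (hc : 0 < c)
    (hca : (c : ℝ) < a false + a true) :
    ∃ q : ℚ × ℚ, q.1 + q.2 = c ∧
      ∀ i, 0 ≤ selOf (q, i) ∧ (selOf (q, i) = 0 ∨ (selOf (q, i) : ℝ) < a i) := by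
  have hc' : (0 : ℝ) < c := by exact_mod_cast hc
  rcases (ha false).eq_or_lt with ha₀ | ha₀
  · refine ⟨(0, c), zero_add c, ?_⟩
    rintro (_ | _)
    · exact ⟨le_rfl, Or.inl rfl⟩
    · exact ⟨hc.le, Or.inr (show (c : ℝ) < a true by linarith)⟩
  rcases (ha true).eq_or_lt with ha₁ | ha₁
  · refine ⟨(c, 0), add_zero c, ?_⟩
    rintro (_ | _)
    · exact ⟨hc.le, Or.inr (show (c : ℝ) < a false by linarith)⟩
    · exact ⟨le_rfl, Or.inl rfl⟩
  obtain ⟨q, hq_lo, hq_hi⟩ := exists_rat_btwn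
    (max_lt (lt_min (by linarith) (by linarith)) (lt_min ha₀ hc') :
      max ((c : ℝ) - a true) 0 < min (a false) c)
  rw [max_lt_iff] at hq_lo
  rw [lt_min_iff] at hq_hi
  have hq_c : q ≤ c := by exact_mod_cast hq_hi.2.le
  refine ⟨(q, c - q), add_sub_cancel q c, ?_⟩
  rintro (_ | _)
  · exact ⟨by exact_mod_cast hq_lo.2.le, Or.inr hq_hi.1⟩
  · refine ⟨sub_nonneg.mpr hq_c, Or.inr ?_⟩
    show ((c - q : ℚ) : ℝ) < a true
    push_cast
    linarith

lemma exists_rat_sum_target {μ : Measure Cantor} {s : ℝ} (hs0 : 0 ≤ s) {h : List GRound}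
    (hlegalI : LegalIPos μ s h)
    (hlegalII : ∀ (k : ℕ) (hk : k < h.length), selOf (h.get ⟨k, hk⟩) ≠ 0) {x : ℝ}
    (hx : (if h.isEmpty then s else ((selOf (h.getLastD ((0, 0), false)) : ℚ) : ℝ)) < x) :
    ∃ c : ℚ, 0 < c ∧ (c : ℝ) < x ∧ ∀ q : ℚ × ℚ, q.1 + q.2 = c →
      (if h.isEmpty then s < (q.1 : ℝ) + (q.2 : ℝ)
       else q.1 + q.2 = selOf (h.getLastD ((0, 0), false))) := by
  rcases h.eq_nil_or_concat with rfl | ⟨L, p, rfl⟩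
  · obtain ⟨c, hsc, hcx⟩ := exists_rat_btwn (by simpa using hx)
    refine ⟨c, by exact_mod_cast hs0.trans_lt hsc, hcx, fun q hq => ?_⟩
    simpa [← hq] using hsc
  · have hlast : L.length < (L.concat p).length := by simp
    have hp_legal := hlegalI _ hlast
    have hp_ne := hlegalII _ hlast
    simp only [List.concat_eq_append, List.get_eq_getElem, List.getElem_concat_length,
      List.take_left'] at hp_legal hp_ne
    refine ⟨selOf p, (hp_legal.selOf_nonneg p.2).lt_of_ne' hp_ne, by simpa using hx,
      fun q hq => by simpa using hq⟩

def answeredValues (μ : Measure Cantor) (s : ℝ) (τ : StratII) (h : List GRound) (i : Bool) :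
    Set ℝ :=
  {v : ℝ | ∃ m : ℚ × ℚ, legalMoveI μ s h m ∧ τ h m = i ∧
    v = ((if i then m.2 else m.1 : ℚ) : ℝ)}

lemma nonneg_of_mem_answeredValues {μ : Measure Cantor} {s : ℝ} {τ : StratII} {h : List GRound}
    {i : Bool} {v : ℝ} (hv : v ∈ answeredValues μ s τ h i) : 0 ≤ v := by
  obtain ⟨m, hm, -, rfl⟩ := hv
  exact_mod_cast hm.selOf_nonneg i

lemma valueOK_of_eq_zero_or_lt {q : ℚ} {d x : ℝ} (hq : 0 ≤ q) (hq_d : q = 0 ∨ (q : ℝ) < d)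
    (hdx : d ≤ x) (hx : 0 ≤ x) : 0 ≤ q ∧ (q : ℝ) ≤ x ∧ (0 < x → (q : ℝ) < x) := by
  rcases hq_d with rfl | hlt
  · simpa using hx
  · exact ⟨hq, (hlt.trans_le hdx).le, fun _ => hlt.trans_le hdx⟩

theorem delta_lemma_general (μ : Measure Cantor)
    (A : Set Cantor) (s : ℝ) (hs0 : 0 ≤ s) (τ : StratII)
    (hτ : ∀ r : Run, ConsII τ r → IIWinsRun μ s A r)
    (h : List GRound)
    (hcons : ∀ (k : ℕ) (hk : k < h.length), (h.get ⟨k, hk⟩).2 = τ (h.take k) (h.get ⟨k, hk⟩).1)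
    (hlegalI : ∀ (k : ℕ) (hk : k < h.length), legalMoveI μ s (h.take k) (h.get ⟨k, hk⟩).1)
    (hlegalII : ∀ (k : ℕ) (hk : k < h.length), selOf (h.get ⟨k, hk⟩) ≠ 0) :
    let t : List Bool := h.map fun p => p.2
    let rv : ℝ := if h.isEmpty then s else ((selOf (h.getLastD ((0, 0), false)) : ℚ) : ℝ)
    let δ : Bool → ℝ := fun i => sInf
      ({v : ℝ | ∃ m : ℚ × ℚ, legalMoveI μ s h m ∧ τ h m = i ∧
          v = ((if i then m.2 else m.1 : ℚ) : ℝ)} ∪ {(μ (cyl (t ++ [i]))).toReal})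
    δ false + δ true ≤ rv ∧ ∀ i : Bool, δ i ≤ (μ (cyl (t ++ [i]))).toReal := by
  intro t rv δ
  have hnonneg (i : Bool) : ∀ v ∈ answeredValues μ s τ h i ∪ {(μ (cyl (t ++ [i]))).toReal}, 0 ≤ v
    | _, .inl hv => nonneg_of_mem_answeredValues hv
    | _, .inr rfl => ENNReal.toReal_nonneg
  have hbdd (i : Bool) := (⟨0, hnonneg i⟩ : BddBelow _)
  have hδ_nonneg (i : Bool) : 0 ≤ δ i := Real.sInf_nonneg (hnonneg i)
  have hδ_le_cyl (i : Bool) : δ i ≤ (μ (cyl (t ++ [i]))).toReal := csInf_le (hbdd i) (.inr rfl)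
  have hδ_le_answer (m : ℚ × ℚ) (hm : legalMoveI μ s h m) :
      δ (τ h m) ≤ selOf (m, τ h m) :=
    csInf_le (hbdd _) (.inl ⟨m, hm, rfl, rfl⟩)
  refine ⟨?_, hδ_le_cyl⟩
  by_contra! hlt
  obtain ⟨c, hc, hcδ, hsum⟩ := exists_rat_sum_target hs0 hlegalI hlegalII hlt
  obtain ⟨q, hq_sum, hq⟩ := exists_rat_split hδ_nonneg hc hcδ
  have hq_legal : legalMoveI μ s h q :=
    ⟨valueOK_of_eq_zero_or_lt (hq false).1 (hq false).2 (hδ_le_cyl false) ENNReal.toReal_nonneg,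
      valueOK_of_eq_zero_or_lt (hq true).1 (hq true).2 (hδ_le_cyl true) ENNReal.toReal_nonneg,
      hsum q hq_sum⟩
  obtain ⟨-, hzero | hcheap⟩ := hq (τ h q)
  · exact selOf_ne_zero_of_winning hτ hcons hlegalI hq_legal hzero
  · exact (hδ_le_answer q hq_legal).not_gt hcheap

/-- The δ-lemma: if `τ` is a winning strategy for player II in `G(s, A)` and `h` is a finite
position consistent with `τ` in which all moves were legal, then, with `t` the string of II's
moves, `r = m_t` (or `r = s` at the empty position) and
`δ(i) = inf({mᵢ-components of legal moves of I to which τ answers i} ∪ {μ(N_{t⌢i})})`,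
we have `δ(0) + δ(1) ≤ r` and `δ(i) ≤ μ(N_{t⌢i})` for each `i`. -/
theorem delta_lemma (μ : Measure Cantor) [IsProbabilityMeasure μ]
    (A : Set Cantor) (s : ℝ) (hs0 : 0 ≤ s) (hs1 : s < 1) (τ : StratII)
    (hτ : ∀ r : Run, ConsII τ r → IIWinsRun μ s A r)
    (h : List GRound)
    (hcons : ∀ (k : ℕ) (hk : k < h.length), (h.get ⟨k, hk⟩).2 = τ (h.take k) (h.get ⟨k, hk⟩).1)
    (hlegalI : ∀ (k : ℕ) (hk : k < h.length), legalMoveI μ s (h.take k) (h.get ⟨k, hk⟩).1)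
    (hlegalII : ∀ (k : ℕ) (hk : k < h.length), selOf (h.get ⟨k, hk⟩) ≠ 0) :
    let t : List Bool := h.map fun p => p.2
    let rv : ℝ := if h.isEmpty then s else ((selOf (h.getLastD ((0, 0), false)) : ℚ) : ℝ)
    let δ : Bool → ℝ := fun i => sInf
      ({v : ℝ | ∃ m : ℚ × ℚ, legalMoveI μ s h m ∧ τ h m = i ∧
          v = ((if i then m.2 else m.1 : ℚ) : ℝ)} ∪ {(μ (cyl (t ++ [i]))).toReal})
    δ false + δ true ≤ rv ∧ ∀ i : Bool, δ i ≤ (μ (cyl (t ++ [i]))).toReal :=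
  delta_lemma_general μ A s hs0 τ hτ h hcons hlegalI hlegalII

end MeasureGame
end
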